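/- A stationary policy g with F(g) = F_* is optimal if and only if the vector (q_i^g : i ∈ G_*) solves the improved optimality equation u_i = min_{a∈A(i)} [ p(B|i,a) + Σ_{j∈G_*} p(j|i,a) u_j ] for all i ∈ G_*, where G_* = Bᶜ \ F_*. -/
import Mathlib


open Finset

variable {S A : Type*}

/-- `hitLe p B n i = P_i(τ_B ≤ n)`: the probability that the Markov chain with
transition kernel `p`, started at `i`, hits the set `B` within `n` steps. -/
noncomputable def hitLe [Fintype S] [DecidableEq S] (p : S → S → ℝ) (B : Finset S) :
    ℕ → S → ℝ
  | 0, i => if i ∈ B then 1 else 0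
  | n + 1, i => if i ∈ B then 1 else ∑ j, p i j * hitLe p B n j

/-- `hitProb p B i = P_i(τ_B < ∞)`, the probability of ever hitting `B` from `i`. -/
noncomputable def hitProb [Fintype S] [DecidableEq S] (p : S → S → ℝ) (B : Finset S)
    (i : S) : ℝ :=
  ⨆ n, hitLe p B n i

/-- `failLe p B π n h i = P^π(τ_B ≤ n)` for the controlled process with transition
law `p`, history-dependent randomized policy `π`, past history `h` and current state `i`. -/
noncomputable def failLe [Fintype S] [Fintype A] [DecidableEq S]
    (p : S → A → S → ℝ) (B : Finset S) (π : List (S × A) → S → A → ℝ) :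
    ℕ → List (S × A) → S → ℝ
  | 0, _, i => if i ∈ B then 1 else 0
  | n + 1, h, i =>
      if i ∈ B then 1
      else ∑ a, π h i a * ∑ j, p i a j * failLe p B π n (h ++ [(i, a)]) j

/-- `failProb p B π i = P_i^π(τ_B < ∞)`, the failure probability under policy `π`. -/
noncomputable def failProb [Fintype S] [Fintype A] [DecidableEq S]
    (p : S → A → S → ℝ) (B : Finset S) (π : List (S × A) → S → A → ℝ) (i : S) : ℝ :=
  ⨆ n, failLe p B π n [] i

/-- `π` is a randomized history-dependent policy for the action sets `Acts`. -/
def IsPolicy (Acts : S → Finset A) (π : List (S × A) → S → A → ℝ) : Prop :=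
  ∀ h i, (∀ a, 0 ≤ π h i a) ∧ (∑ a ∈ Acts i, π h i a = 1) ∧ ∀ a ∉ Acts i, π h i a = 0

/-- `failStar Acts p B i = q_i^* = inf_π P_i^π(τ_B < ∞)`. -/
noncomputable def failStar [Fintype S] [Fintype A] [DecidableEq S]
    (Acts : S → Finset A) (p : S → A → S → ℝ) (B : Finset S) (i : S) : ℝ :=
  sInf {x | ∃ π, IsPolicy Acts π ∧ x = failProb p B π i}

/-- `F ⊂ Bᶜ` is a `Bᶜ`-closed set of the stationary policy `g`:
`p(F | i, g(i)) = 1` for every `i ∈ F`. -/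
def IsBcClosed [Fintype S] (p : S → A → S → ℝ) (B : Finset S) (g : S → A)
    (F : Finset S) : Prop :=
  (∀ i ∈ F, i ∉ B) ∧ ∀ i ∈ F, ∑ j ∈ F, p i (g i) j = 1

/-- `Fabs p B g = F(g)`, the `Bᶜ`-absorbing set of `g`: the union of all
`Bᶜ`-closed sets of `g`. -/
def Fabs [Fintype S] (p : S → A → S → ℝ) (B : Finset S) (g : S → A) : Set S :=
  {i | ∃ F, IsBcClosed p B g F ∧ i ∈ F}

/-- `FStar Acts p B = F_* = ⋃_{g} F(g)`, the union over all stationary policies. -/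
def FStar [Fintype S] (Acts : S → Finset A) (p : S → A → S → ℝ) (B : Finset S) : Set S :=
  {i | ∃ g : S → A, (∀ s, g s ∈ Acts s) ∧ i ∈ Fabs p B g}

open scoped Classical

/-- `GStar Acts p B = G_* = Bᶜ \ F_*`, as a finite set of states. -/
noncomputable def GStar [Fintype S] (Acts : S → Finset A) (p : S → A → S → ℝ)
    (B : Finset S) : Finset S :=
  Finset.univ.filter fun i => i ∉ B ∧ i ∉ FStar Acts p B


set_option linter.unusedSectionVars false
set_option maxHeartbeats 1000000

section HitLemmas
variable [Fintype S] [DecidableEq S] {q : S → S → ℝ} {B : Finset S}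
  (hq0 : ∀ i j, 0 ≤ q i j) (hq1 : ∀ i, ∑ j, q i j = 1)

lemma hitLe_mem (n : ℕ) {i : S} (hi : i ∈ B) : hitLe q B n i = 1 := by
  cases n <;> simp [hitLe, hi]

include hq0 in
lemma hitLe_nonneg (n : ℕ) (i : S) : 0 ≤ hitLe q B n i := by
  induction n generalizing i with
  | zero => simp only [hitLe]; positivity
  | succ n ih =>
    simp only [hitLe]
    split
    · exact zero_le_one
    · exact Finset.sum_nonneg fun j _ => mul_nonneg (hq0 i j) (ih j)

include hq0 hq1 in
lemma hitLe_le_one (n : ℕ) (i : S) : hitLe q B n i ≤ 1 := by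
  induction n generalizing i with
  | zero => simp only [hitLe]; split <;> norm_num
  | succ n ih =>
    simp only [hitLe]
    split
    · exact le_refl 1
    · calc ∑ j, q i j * hitLe q B n j ≤ ∑ j, q i j * 1 :=
            Finset.sum_le_sum fun j _ => mul_le_mul_of_nonneg_left (ih j) (hq0 i j)
        _ = 1 := by simp [hq1 i]

include hq0 in
lemma hitLe_mono (n : ℕ) (i : S) : hitLe q B n i ≤ hitLe q B (n + 1) i := by
  induction n generalizing i with
  | zero =>
    simp only [hitLe]
    split
    · exact le_refl 1
    · exact Finset.sum_nonneg fun j _ => mul_nonneg (hq0 i j)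
        (hitLe_nonneg hq0 0 j)
  | succ n ih =>
    simp only [hitLe]
    split
    · exact le_refl 1
    · exact Finset.sum_le_sum fun j _ => mul_le_mul_of_nonneg_left (ih j) (hq0 i j)

include hq0 in
lemma hitLe_monotone (i : S) : Monotone fun n => hitLe q B n i :=
  monotone_nat_of_le_succ fun n => hitLe_mono hq0 n i

include hq0 hq1 in
lemma hitLe_bdd (i : S) : BddAbove (Set.range fun n => hitLe q B n i) :=
  ⟨1, by rintro x ⟨n, rfl⟩; exact hitLe_le_one hq0 hq1 n i⟩

include hq0 hq1 in
lemma tendsto_hitLe (i : S) :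
    Filter.Tendsto (fun n => hitLe q B n i) Filter.atTop (nhds (hitProb q B i)) :=
  tendsto_atTop_ciSup (hitLe_monotone hq0 i) (hitLe_bdd hq0 hq1 i)

include hq0 hq1 in
lemma hitLe_le_hitProb (n : ℕ) (i : S) : hitLe q B n i ≤ hitProb q B i :=
  le_ciSup (hitLe_bdd hq0 hq1 i) n

include hq0 hq1 in
lemma hitProb_nonneg (i : S) : 0 ≤ hitProb q B i :=
  le_trans (hitLe_nonneg hq0 0 i) (hitLe_le_hitProb hq0 hq1 0 i)

include hq0 hq1 in
lemma hitProb_le_one (i : S) : hitProb q B i ≤ 1 :=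
  ciSup_le fun n => hitLe_le_one hq0 hq1 n i

lemma hitProb_mem {i : S} (hi : i ∈ B) : hitProb q B i = 1 := by
  simp [hitProb, hitLe_mem _ hi]

include hq0 hq1 in
lemma hitProb_step {i : S} (hi : i ∉ B) :
    hitProb q B i = ∑ j, q i j * hitProb q B j := by
  have h1 : Filter.Tendsto (fun n => hitLe q B (n + 1) i) Filter.atTop
      (nhds (hitProb q B i)) :=
    (Filter.tendsto_add_atTop_iff_nat 1).2 (tendsto_hitLe hq0 hq1 i)
  have h2 : Filter.Tendsto (fun n => hitLe q B (n + 1) i) Filter.atTop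
      (nhds (∑ j, q i j * hitProb q B j)) := by
    have : ∀ n, hitLe q B (n + 1) i = ∑ j, q i j * hitLe q B n j := by
      intro n; simp [hitLe, hi]
    simp only [this]
    exact tendsto_finset_sum _ fun j _ =>
      (tendsto_hitLe hq0 hq1 j).const_mul (q i j)
  exact tendsto_nhds_unique h1 h2

end HitLemmas

section FailLemmas
variable [Fintype S] [Fintype A] [DecidableEq S]
  {Acts : S → Finset A} {p : S → A → S → ℝ} {B : Finset S}
  {π : List (S × A) → S → A → ℝ}
  (hp0 : ∀ i, ∀ a ∈ Acts i, ∀ j, 0 ≤ p i a j)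
  (hp1 : ∀ i, ∀ a ∈ Acts i, ∑ j, p i a j = 1)
  (hπ : IsPolicy Acts π)

include hπ in
lemma sum_policy_mul (h : List (S × A)) (i : S) (X : A → ℝ) :
    ∑ a, π h i a * X a = ∑ a ∈ Acts i, π h i a * X a := by
  refine (Finset.sum_subset (Finset.subset_univ _) fun a _ ha => ?_).symm
  rw [(hπ h i).2.2 a ha, zero_mul]

lemma failLe_mem (n : ℕ) (h : List (S × A)) {i : S} (hi : i ∈ B) :
    failLe p B π n h i = 1 := by
  cases n <;> simp [failLe, hi]

include hp0 hπ in
lemma failLe_nonneg (n : ℕ) (h : List (S × A)) (i : S) : 0 ≤ failLe p B π n h i := by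
  induction n generalizing h i with
  | zero => simp only [failLe]; positivity
  | succ n ih =>
    simp only [failLe]
    split
    · exact zero_le_one
    · rw [sum_policy_mul hπ]
      exact Finset.sum_nonneg fun a ha => mul_nonneg ((hπ h i).1 a)
        (Finset.sum_nonneg fun j _ => mul_nonneg (hp0 i a ha j) (ih _ j))

include hp0 hp1 hπ in
lemma failLe_le_one (n : ℕ) (h : List (S × A)) (i : S) : failLe p B π n h i ≤ 1 := by
  induction n generalizing h i with
  | zero => simp only [failLe]; split <;> norm_num
  | succ n ih =>
    simp only [failLe]
    split
    · exact le_refl 1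
    · rw [sum_policy_mul hπ]
      calc ∑ a ∈ Acts i, π h i a * ∑ j, p i a j * failLe p B π n (h ++ [(i, a)]) j
          ≤ ∑ a ∈ Acts i, π h i a * 1 := by
            refine Finset.sum_le_sum fun a ha => mul_le_mul_of_nonneg_left ?_ ((hπ h i).1 a)
            calc (∑ j, p i a j * failLe p B π n (h ++ [(i, a)]) j)
                ≤ ∑ j, p i a j * 1 := Finset.sum_le_sum fun j _ =>
                  mul_le_mul_of_nonneg_left (ih _ j) (hp0 i a ha j)
              _ = 1 := by simp [hp1 i a ha]
        _ = 1 := by simp [(hπ h i).2.1]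

include hp0 hπ in
lemma failLe_mono (n : ℕ) (h : List (S × A)) (i : S) :
    failLe p B π n h i ≤ failLe p B π (n + 1) h i := by
  induction n generalizing h i with
  | zero =>
    simp only [failLe]
    split
    · exact le_refl 1
    · rw [sum_policy_mul hπ]
      exact Finset.sum_nonneg fun a ha => mul_nonneg ((hπ h i).1 a)
        (Finset.sum_nonneg fun j _ => mul_nonneg (hp0 i a ha j)
          (failLe_nonneg hp0 hπ 0 (h ++ [(i,a)]) j))
  | succ n ih =>
    simp only [failLe]
    split
    · exact le_refl 1
    · rw [sum_policy_mul hπ, sum_policy_mul hπ]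
      refine Finset.sum_le_sum fun a ha => mul_le_mul_of_nonneg_left ?_ ((hπ h i).1 a)
      exact Finset.sum_le_sum fun j _ => mul_le_mul_of_nonneg_left (ih _ j) (hp0 i a ha j)

include hp0 hπ in
lemma failLe_monotone (h : List (S × A)) (i : S) :
    Monotone fun n => failLe p B π n h i :=
  monotone_nat_of_le_succ fun n => failLe_mono hp0 hπ n h i

include hp0 hp1 hπ in
lemma failLe_bdd (h : List (S × A)) (i : S) :
    BddAbove (Set.range fun n => failLe p B π n h i) :=
  ⟨1, by rintro x ⟨n, rfl⟩; exact failLe_le_one hp0 hp1 hπ n h i⟩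

include hp0 hp1 hπ in
lemma failLe_le_failProb (n : ℕ) (i : S) : failLe p B π n [] i ≤ failProb p B π i :=
  le_ciSup (failLe_bdd hp0 hp1 hπ [] i) n

include hp0 hp1 hπ in
lemma failProb_nonneg (i : S) : 0 ≤ failProb p B π i :=
  le_trans (failLe_nonneg hp0 hπ 0 [] i) (failLe_le_failProb hp0 hp1 hπ 0 i)

include hp0 hp1 hπ in
lemma tendsto_failLe (i : S) :
    Filter.Tendsto (fun n => failLe p B π n [] i) Filter.atTop
      (nhds (failProb p B π i)) :=
  tendsto_atTop_ciSup (failLe_monotone hp0 hπ [] i) (failLe_bdd hp0 hp1 hπ [] i)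

end FailLemmas

section DetPol
variable [Fintype S] [Fintype A] [DecidableEq S]
  {Acts : S → Finset A} {p : S → A → S → ℝ} {B : Finset S}

open scoped Classical in
/-- The deterministic stationary policy given by `g`. -/
noncomputable def detPol (g : S → A) : List (S × A) → S → A → ℝ :=
  fun _ _s a => if a = g _s then 1 else 0

open scoped Classical in
lemma detPol_isPolicy {g : S → A} (hg : ∀ i, g i ∈ Acts i) :
    IsPolicy Acts (detPol (A := A) g) := by
  refine fun h i => ⟨fun a => by simp only [detPol]; positivity, ?_, fun a ha => ?_⟩
  · simp [detPol, Finset.sum_ite_eq', hg i]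
  · simp only [detPol, ite_eq_right_iff]
    intro rfl_eq; exact absurd (rfl_eq ▸ hg i) ha

open scoped Classical in
lemma failLe_detPol (g : S → A) (n : ℕ) (h : List (S × A)) (i : S) :
    failLe p B (detPol g) n h i = hitLe (fun i j => p i (g i) j) B n i := by
  induction n generalizing h i with
  | zero => simp [failLe, hitLe]
  | succ n ih =>
    simp only [failLe, hitLe]
    split
    · rfl
    · simp only [ih, detPol, ite_mul, one_mul, zero_mul]
      rw [Finset.sum_ite_eq' Finset.univ (g i)]
      simp

open scoped Classical in
lemma failProb_detPol (g : S → A) (i : S) :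
    failProb p B (detPol g) i = hitProb (fun i j => p i (g i) j) B i := by
  unfold failProb hitProb
  simp [failLe_detPol]
end DetPol

section Structure
variable [Fintype S] [Fintype A] [DecidableEq S]
  {Acts : S → Finset A} {p : S → A → S → ℝ} {B : Finset S}
  (hp0 : ∀ i, ∀ a ∈ Acts i, ∀ j, 0 ≤ p i a j)
  (hp1 : ∀ i, ∀ a ∈ Acts i, ∑ j, p i a j = 1)

/-- `F_*` as a Finset. -/
noncomputable def FSet (Acts : S → Finset A) (p : S → A → S → ℝ) (B : Finset S) :
    Finset S :=
  Finset.univ.filter fun i => i ∈ FStar Acts p B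

lemma mem_FSet {i : S} : i ∈ FSet Acts p B ↔ i ∈ FStar Acts p B := by
  simp [FSet]

lemma mem_GStar {i : S} : i ∈ GStar Acts p B ↔ i ∉ B ∧ i ∉ FStar Acts p B := by
  simp [GStar]

lemma FStar_not_mem_B {i : S} (hi : i ∈ FStar Acts p B) : i ∉ B := by
  obtain ⟨g', -, F, hF, hiF⟩ := hi
  exact hF.1 i hiF

lemma sum_split (f : S → ℝ) :
    ∑ j, f j = (∑ j ∈ B, f j) + (∑ j ∈ FSet Acts p B, f j)
      + ∑ j ∈ GStar Acts p B, f j := by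
  have hd1 : Disjoint (FSet Acts p B) (GStar Acts p B) := by
    rw [Finset.disjoint_left]
    intro i hi hi'
    exact ((mem_GStar.1 hi').2) (mem_FSet.1 hi)
  have hd2 : Disjoint B (FSet Acts p B ∪ GStar Acts p B) := by
    rw [Finset.disjoint_left]
    intro i hi hi'
    rcases Finset.mem_union.1 hi' with h | h
    · exact FStar_not_mem_B (mem_FSet.1 h) hi
    · exact (mem_GStar.1 h).1 hi
  have hu : B ∪ (FSet Acts p B ∪ GStar Acts p B) = Finset.univ := by
    ext i
    simp only [Finset.mem_union, Finset.mem_univ, iff_true, mem_FSet, mem_GStar]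
    by_cases h1 : i ∈ B
    · exact Or.inl h1
    · by_cases h2 : i ∈ FStar Acts p B
      · exact Or.inr (Or.inl h2)
      · exact Or.inr (Or.inr ⟨h1, h2⟩)
  rw [← hu, Finset.sum_union hd2, Finset.sum_union hd1, add_assoc]

variable {g : S → A} (hg : ∀ i, g i ∈ Acts i)
  (hFg : Fabs p B g = FStar Acts p B)

include hp0 hp1 hg hFg in
lemma FSet_closed {i : S} (hi : i ∈ FSet Acts p B) :
    ∑ j ∈ FSet Acts p B, p i (g i) j = 1 := by
  have hi' : i ∈ Fabs p B g := hFg ▸ mem_FSet.1 hi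
  obtain ⟨F, hF, hiF⟩ := hi'
  have hsub : F ⊆ FSet Acts p B := by
    intro j hj
    exact mem_FSet.2 (hFg ▸ (⟨F, hF, hj⟩ : j ∈ Fabs p B g))
  have h1 : (1:ℝ) = ∑ j ∈ F, p i (g i) j := (hF.2 i hiF).symm
  have h2 : ∑ j ∈ F, p i (g i) j ≤ ∑ j ∈ FSet Acts p B, p i (g i) j :=
    Finset.sum_le_sum_of_subset_of_nonneg hsub fun j _ _ => hp0 i (g i) (hg i) j
  have h3 : ∑ j ∈ FSet Acts p B, p i (g i) j ≤ ∑ j, p i (g i) j :=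
    Finset.sum_le_sum_of_subset_of_nonneg (Finset.subset_univ _)
      fun j _ _ => hp0 i (g i) (hg i) j
  have h4 := hp1 i (g i) (hg i)
  linarith

include hp0 hp1 hg hFg in
lemma FSet_p_zero {i j : S} (hi : i ∈ FSet Acts p B) (hj : j ∉ FSet Acts p B) :
    p i (g i) j = 0 := by
  have hsplit : ∑ k ∈ Finset.univ \ FSet Acts p B, p i (g i) k = 0 := by
    have := Finset.sum_sdiff (f := fun k => p i (g i) k)
      (Finset.subset_univ (FSet Acts p B))
    rw [FSet_closed hp0 hp1 hg hFg hi, hp1 i (g i) (hg i)] at this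
    linarith
  have := (Finset.sum_eq_zero_iff_of_nonneg
    (fun k _ => hp0 i (g i) (hg i) k)).1 hsplit j
    (Finset.mem_sdiff.2 ⟨Finset.mem_univ j, hj⟩)
  exact this

include hp0 hp1 hg hFg in
lemma hitLe_zero_on_FSet (n : ℕ) {i : S} (hi : i ∈ FSet Acts p B) :
    hitLe (fun i j => p i (g i) j) B n i = 0 := by
  induction n generalizing i with
  | zero =>
    simp only [hitLe, if_neg (FStar_not_mem_B (mem_FSet.1 hi))]
  | succ n ih =>
    simp only [hitLe, if_neg (FStar_not_mem_B (mem_FSet.1 hi))]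
    refine Finset.sum_eq_zero fun j _ => ?_
    by_cases hj : j ∈ FSet Acts p B
    · rw [ih hj, mul_zero]
    · rw [FSet_p_zero hp0 hp1 hg hFg hi hj, zero_mul]

include hp0 hp1 hg hFg in
lemma hitProb_zero_on_FSet {i : S} (hi : i ∈ FSet Acts p B) :
    hitProb (fun i j => p i (g i) j) B i = 0 := by
  unfold hitProb
  simp [hitLe_zero_on_FSet hp0 hp1 hg hFg _ hi]

end Structure

section Stay
variable [Fintype S] [Fintype A] [DecidableEq S]

/-- Maximal probability of staying in `G_*` for `n` steps. -/
noncomputable def stay (Acts : S → Finset A) (hA : ∀ i, (Acts i).Nonempty)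
    (p : S → A → S → ℝ) (B : Finset S) : ℕ → S → ℝ
  | 0, i => if i ∈ GStar Acts p B then 1 else 0
  | n + 1, i =>
      if i ∈ GStar Acts p B
      then (Acts i).sup' (hA i) fun a => ∑ j, p i a j * stay Acts hA p B n j
      else 0

variable {Acts : S → Finset A} (hA : ∀ i, (Acts i).Nonempty)
  {p : S → A → S → ℝ} {B : Finset S}
  (hp0 : ∀ i, ∀ a ∈ Acts i, ∀ j, 0 ≤ p i a j)
  (hp1 : ∀ i, ∀ a ∈ Acts i, ∑ j, p i a j = 1)

lemma stay_off (n : ℕ) {i : S} (hi : i ∉ GStar Acts p B) :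
    stay Acts hA p B n i = 0 := by
  cases n <;> simp [stay, hi]

include hp0 in
lemma stay_nonneg (n : ℕ) (i : S) : 0 ≤ stay Acts hA p B n i := by
  induction n generalizing i with
  | zero => simp only [stay]; positivity
  | succ n ih =>
    simp only [stay]
    split
    · obtain ⟨a, ha⟩ := hA i
      exact le_trans (Finset.sum_nonneg fun j _ => mul_nonneg (hp0 i a ha j) (ih j))
        (Finset.le_sup' (fun a => ∑ j, p i a j * stay Acts hA p B n j) ha)
    · exact le_refl 0

include hp0 hp1 in
lemma stay_le_one (n : ℕ) (i : S) : stay Acts hA p B n i ≤ 1 := by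
  induction n generalizing i with
  | zero => simp only [stay]; split <;> norm_num
  | succ n ih =>
    simp only [stay]
    split
    · refine Finset.sup'_le _ _ fun a ha => ?_
      calc ∑ j, p i a j * stay Acts hA p B n j ≤ ∑ j, p i a j * 1 :=
            Finset.sum_le_sum fun j _ => mul_le_mul_of_nonneg_left (ih j) (hp0 i a ha j)
        _ = 1 := by simp [hp1 i a ha]
    · exact zero_le_one

include hp0 hp1 in
lemma stay_succ_le (n : ℕ) (i : S) :
    stay Acts hA p B (n + 1) i ≤ stay Acts hA p B n i := by
  induction n generalizing i with
  | zero =>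
    by_cases hi : i ∈ GStar Acts p B
    · simp only [stay, if_pos hi]
      refine Finset.sup'_le _ _ fun a ha => ?_
      calc ∑ j, p i a j * stay Acts hA p B 0 j ≤ ∑ j, p i a j * 1 :=
            Finset.sum_le_sum fun j _ => mul_le_mul_of_nonneg_left
              (stay_le_one hA hp0 hp1 0 j) (hp0 i a ha j)
        _ = 1 := by simp [hp1 i a ha]
    · simp [stay_off hA _ hi]
  | succ n ih =>
    by_cases hi : i ∈ GStar Acts p B
    · show stay Acts hA p B (n + 2) i ≤ stay Acts hA p B (n + 1) i
      simp only [stay, if_pos hi]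
      refine Finset.sup'_le _ _ fun a ha => ?_
      refine le_trans (Finset.sum_le_sum fun j _ =>
        mul_le_mul_of_nonneg_left (ih j) (hp0 i a ha j)) ?_
      exact Finset.le_sup' (fun a => ∑ j, p i a j * stay Acts hA p B n j) ha
    · simp [stay_off hA _ hi]

include hp0 hp1 in
lemma stay_antitone (i : S) : Antitone fun n => stay Acts hA p B n i :=
  antitone_nat_of_succ_le fun n => stay_succ_le hA hp0 hp1 n i

variable (hG : (GStar Acts p B).Nonempty)

/-- `cmax n` = max over `G_*` of `stay n`. -/
noncomputable def cmax (hG : (GStar Acts p B).Nonempty) (n : ℕ) : ℝ :=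
  (GStar Acts p B).sup' hG (stay Acts hA p B n)

include hp0 in
lemma stay_le_cmax (n : ℕ) (i : S) : stay Acts hA p B n i ≤ cmax hA hG n := by
  by_cases hi : i ∈ GStar Acts p B
  · exact Finset.le_sup' (stay Acts hA p B n) hi
  · rw [stay_off hA _ hi]
    obtain ⟨j, hj⟩ := hG
    exact le_trans (stay_nonneg hA hp0 n j) (Finset.le_sup' (stay Acts hA p B n) hj)

include hp0 in
lemma cmax_nonneg (n : ℕ) : 0 ≤ cmax hA hG n := by
  obtain ⟨j, hj⟩ := hG
  exact le_trans (stay_nonneg hA hp0 n j) (Finset.le_sup' (stay Acts hA p B n) hj)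

include hp0 hp1 in
lemma cmax_le_one (n : ℕ) : cmax hA hG n ≤ 1 :=
  Finset.sup'_le _ _ fun j _ => stay_le_one hA hp0 hp1 n j

include hp0 in
lemma stay_submul (n m : ℕ) (i : S) :
    stay Acts hA p B (m + n) i ≤ cmax hA hG n * stay Acts hA p B m i := by
  induction m generalizing i with
  | zero =>
    by_cases hi : i ∈ GStar Acts p B
    · simpa [stay, hi] using stay_le_cmax hA hp0 hG n i
    · simp [stay_off hA _ hi]
  | succ m ih =>
    by_cases hi : i ∈ GStar Acts p B
    · have : m + 1 + n = (m + n) + 1 := by omega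
      rw [this]
      simp only [stay, if_pos hi]
      refine Finset.sup'_le _ _ fun a ha => ?_
      calc ∑ j, p i a j * stay Acts hA p B (m + n) j
          ≤ ∑ j, p i a j * (cmax hA hG n * stay Acts hA p B m j) :=
            Finset.sum_le_sum fun j _ => mul_le_mul_of_nonneg_left (ih j) (hp0 i a ha j)
        _ = cmax hA hG n * ∑ j, p i a j * stay Acts hA p B m j := by
            rw [Finset.mul_sum]; congr 1; ext j; ring
        _ ≤ cmax hA hG n * (Acts i).sup' (hA i)
              (fun a => ∑ j, p i a j * stay Acts hA p B m j) :=
            mul_le_mul_of_nonneg_left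
              (Finset.le_sup' (fun a => ∑ j, p i a j * stay Acts hA p B m j) ha)
              (cmax_nonneg hA hp0 hG n)
    · simp [stay_off hA _ hi]

end Stay

section StayZero
variable [Fintype S] [Fintype A] [DecidableEq S]
  {Acts : S → Finset A} (hA : ∀ i, (Acts i).Nonempty)
  {p : S → A → S → ℝ} {B : Finset S}
  (hp0 : ∀ i, ∀ a ∈ Acts i, ∀ j, 0 ≤ p i a j)
  (hp1 : ∀ i, ∀ a ∈ Acts i, ∑ j, p i a j = 1)
  (hG : (GStar Acts p B).Nonempty)

include hp0 hp1 in
lemma exists_cmax_lt_one : ∃ N, cmax hA hG N < 1 := by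
  by_contra hcon
  push_neg at hcon
  have hc1 : ∀ n, cmax hA hG n = 1 := fun n =>
    le_antisymm (cmax_le_one hA hp0 hp1 hG n) (hcon n)
  -- for each n there is a state in G_* with stay n = 1
  have h1 : ∀ n, ∃ i, i ∈ GStar Acts p B ∧ stay Acts hA p B n i = 1 := by
    intro n
    obtain ⟨i, hiG, hi⟩ := Finset.exists_mem_eq_sup' hG (stay Acts hA p B n)
    exact ⟨i, hiG, by rw [← hi, ← cmax, hc1 n]⟩
  choose f hfG hf1 using h1
  obtain ⟨i₀, hfib⟩ := Finite.exists_infinite_fiber f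
  have hinf : (f ⁻¹' {i₀} : Set ℕ).Infinite := Set.infinite_coe_iff.1 hfib
  have hi₀all : ∀ m, stay Acts hA p B m i₀ = 1 := by
    intro m
    obtain ⟨n, hn, hmn⟩ := hinf.exists_gt m
    have h2 : stay Acts hA p B n i₀ = 1 := by
      have : f n = i₀ := hn
      rw [← this]; exact hf1 n
    have h3 : stay Acts hA p B n i₀ ≤ stay Acts hA p B m i₀ :=
      stay_antitone hA hp0 hp1 i₀ (le_of_lt hmn)
    have h4 := stay_le_one hA hp0 hp1 (B := B) m i₀
    linarith
  -- the set of states where stay is identically 1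
  classical
  set D : Finset S := Finset.univ.filter (fun i => ∀ n, stay Acts hA p B n i = 1)
    with hD
  have hDne : i₀ ∈ D := by simp [hD, hi₀all]
  have hDG : ∀ i ∈ D, i ∈ GStar Acts p B := by
    intro i hi
    by_contra hiG
    have := (Finset.mem_filter.1 hi).2 0
    rw [stay_off hA 0 hiG] at this
    norm_num at this
  -- for each i ∈ D there is an action keeping the chain in D
  have hPa : ∀ i ∈ D, ∃ a, a ∈ Acts i ∧ ∑ j ∈ D, p i a j = 1 := by
    intro i hi
    have hi1 : ∀ n, stay Acts hA p B n i = 1 := (Finset.mem_filter.1 hi).2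
    have h2 : ∀ n, ∃ a, a ∈ Acts i ∧ ∑ j, p i a j * stay Acts hA p B n j = 1 := by
      intro n
      have := hi1 (n + 1)
      rw [show stay Acts hA p B (n+1) i = (Acts i).sup' (hA i)
          (fun a => ∑ j, p i a j * stay Acts hA p B n j) by
        simp [stay, hDG i hi]] at this
      obtain ⟨a, haA, ha⟩ := Finset.exists_mem_eq_sup' (hA i)
        (fun a => ∑ j, p i a j * stay Acts hA p B n j)
      exact ⟨a, haA, by rw [← ha, this]⟩
    choose fa hfaA hfa1 using h2
    obtain ⟨a, hafib⟩ := Finite.exists_infinite_fiber fa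
    have hainf : (fa ⁻¹' {a} : Set ℕ).Infinite := Set.infinite_coe_iff.1 hafib
    obtain ⟨n₁, hn₁, -⟩ := hainf.exists_gt 0
    have haA : a ∈ Acts i := by rw [← (hn₁ : fa n₁ = a)]; exact hfaA n₁
    have hall : ∀ n, ∑ j, p i a j * stay Acts hA p B n j = 1 := by
      intro m
      obtain ⟨n, hn, hmn⟩ := hainf.exists_gt m
      have h3 : ∑ j, p i a j * stay Acts hA p B n j = 1 := by
        rw [← (hn : fa n = a)]; exact hfa1 n
      have h4 : ∑ j, p i a j * stay Acts hA p B n j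
          ≤ ∑ j, p i a j * stay Acts hA p B m j :=
        Finset.sum_le_sum fun j _ => mul_le_mul_of_nonneg_left
          (stay_antitone hA hp0 hp1 j (le_of_lt hmn)) (hp0 i a haA j)
      have h5 : ∑ j, p i a j * stay Acts hA p B m j ≤ ∑ j, p i a j * 1 :=
        Finset.sum_le_sum fun j _ => mul_le_mul_of_nonneg_left
          (stay_le_one hA hp0 hp1 m j) (hp0 i a haA j)
      have h6 : ∑ j, p i a j * (1:ℝ) = 1 := by simp [hp1 i a haA]
      linarith
    -- states reachable by a are in D
    have hreach : ∀ j, j ∉ D → p i a j = 0 := by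
      intro j hjD
      by_contra hpj
      have hpj' : 0 < p i a j := lt_of_le_of_ne (hp0 i a haA j) (Ne.symm hpj)
      -- there is n with stay n j < 1
      have hjn : ∃ n, stay Acts hA p B n j ≠ 1 := by
        by_contra hcon2
        push_neg at hcon2
        exact hjD (Finset.mem_filter.2 ⟨Finset.mem_univ j, hcon2⟩)
      obtain ⟨n, hn⟩ := hjn
      have hlt : stay Acts hA p B n j < 1 :=
        lt_of_le_of_ne (stay_le_one hA hp0 hp1 n j) hn
      have hsum0 : ∑ k, p i a k * (1 - stay Acts hA p B n k) = 0 := by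
        have : ∑ k, p i a k * (1 - stay Acts hA p B n k)
            = (∑ k, p i a k) - ∑ k, p i a k * stay Acts hA p B n k := by
          rw [← Finset.sum_sub_distrib]; congr 1; ext k; ring
        rw [this, hp1 i a haA, hall n]; ring
      have hterm := (Finset.sum_eq_zero_iff_of_nonneg
        (fun k _ => mul_nonneg (hp0 i a haA k)
          (sub_nonneg.2 (stay_le_one hA hp0 hp1 n k)))).1 hsum0 j (Finset.mem_univ j)
      nlinarith
    refine ⟨a, haA, ?_⟩
    have := Finset.sum_sdiff (f := fun k => p i a k) (Finset.subset_univ D)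
    have hz : ∑ k ∈ Finset.univ \ D, p i a k = 0 :=
      Finset.sum_eq_zero fun k hk => hreach k (Finset.mem_sdiff.1 hk).2
    rw [hz, zero_add] at this
    rw [this, hp1 i a haA]
  -- build a stationary policy absorbing on D
  haveI : Nonempty A := ⟨(hA hG.choose).choose⟩
  choose! ga hgaA hga1 using hPa
  set g' : S → A := fun i => if i ∈ D then ga i else (hA i).choose with hg'
  have hg'A : ∀ s, g' s ∈ Acts s := by
    intro s
    by_cases hs : s ∈ D
    · simp only [hg', if_pos hs]; exact hgaA s hs
    · simp only [hg', if_neg hs]; exact (hA s).choose_spec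
  have hclosed : IsBcClosed p B g' D := by
    constructor
    · intro i hi
      exact (mem_GStar.1 (hDG i hi)).1
    · intro i hi
      simp only [hg', if_pos hi]
      exact hga1 i hi
  have : i₀ ∈ FStar Acts p B := ⟨g', hg'A, D, hclosed, hDne⟩
  exact (mem_GStar.1 (hDG i₀ hDne)).2 this

include hp0 hp1 hG in
lemma stay_small (i : S) {ε : ℝ} (hε : 0 < ε) :
    ∃ n, stay Acts hA p B n i < ε := by
  obtain ⟨N, hN⟩ := exists_cmax_lt_one hA hp0 hp1 hG
  obtain ⟨k, hk⟩ := exists_pow_lt_of_lt_one hε hN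
  refine ⟨k * N, lt_of_le_of_lt ?_ hk⟩
  clear hk
  induction k with
  | zero =>
    simpa using stay_le_one hA hp0 hp1 0 i
  | succ k ih =>
    have h1 : (k + 1) * N = k * N + N := by ring
    rw [h1]
    calc stay Acts hA p B (k * N + N) i
        ≤ cmax hA hG N * stay Acts hA p B (k * N) i :=
          stay_submul hA hp0 hG N (k * N) i
      _ ≤ cmax hA hG N * cmax hA hG N ^ k :=
          mul_le_mul_of_nonneg_left ih (cmax_nonneg hA hp0 hG N)
      _ = cmax hA hG N ^ (k + 1) := by ring
end StayZero

section OneStep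
variable [Fintype S] [Fintype A] [DecidableEq S]
  {Acts : S → Finset A} {p : S → A → S → ℝ} {B : Finset S} {g : S → A}

open scoped Classical in
/-- Policy: use `a₀` at the first step in state `i₀`, then follow `g`. -/
noncomputable def oneStep (i₀ : S) (a₀ : A) (g : S → A) :
    List (S × A) → S → A → ℝ :=
  fun h s b =>
    if h = [] ∧ s = i₀ then (if b = a₀ then 1 else 0) else (if b = g s then 1 else 0)

lemma oneStep_isPolicy (hg : ∀ i, g i ∈ Acts i) {i₀ : S} {a₀ : A}
    (ha₀ : a₀ ∈ Acts i₀) : IsPolicy Acts (oneStep i₀ a₀ g) := by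
  intro h i
  refine ⟨fun a => ?_, ?_, fun a ha => ?_⟩
  · unfold oneStep; split <;> (split <;> norm_num)
  · by_cases hc : h = [] ∧ i = i₀
    · simp only [oneStep, if_pos hc]
      rw [Finset.sum_ite_eq' (Acts i) a₀ (fun _ => (1:ℝ))]
      simp [hc.2 ▸ ha₀]
    · simp only [oneStep, if_neg hc]
      rw [Finset.sum_ite_eq' (Acts i) (g i) (fun _ => (1:ℝ))]
      simp [hg i]
  · unfold oneStep
    split
    · rename_i hc
      simp only [ite_eq_right_iff]
      intro rfl_eq; exact absurd (rfl_eq ▸ hc.2 ▸ ha₀) (hc.2 ▸ ha)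
    · simp only [ite_eq_right_iff]
      intro rfl_eq; exact absurd (rfl_eq ▸ hg i) ha

lemma failLe_oneStep_ne (i₀ : S) (a₀ : A) (n : ℕ) (h : List (S × A)) (j : S)
    (hh : h ≠ []) :
    failLe p B (oneStep i₀ a₀ g) n h j = hitLe (fun i j => p i (g i) j) B n j := by
  induction n generalizing h j with
  | zero => simp [failLe, hitLe]
  | succ n ih =>
    simp only [failLe, hitLe]
    split
    · rfl
    · have hc : ¬(h = [] ∧ j = i₀) := fun hc => hh hc.1
      simp only [oneStep, if_neg hc, ite_mul, one_mul, zero_mul]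
      rw [Finset.sum_ite_eq' Finset.univ (g j)]
      simp only [Finset.mem_univ, if_pos]
      refine Finset.sum_congr rfl fun k _ => ?_
      rw [ih (h ++ [(j, g j)]) k (by simp)]

lemma failLe_oneStep_succ {i₀ : S} (a₀ : A) (n : ℕ) (hi₀ : i₀ ∉ B) :
    failLe p B (oneStep i₀ a₀ g) (n + 1) [] i₀
      = ∑ j, p i₀ a₀ j * hitLe (fun i j => p i (g i) j) B n j := by
  simp only [failLe, if_neg hi₀]
  simp only [oneStep, eq_self_iff_true, and_self, if_true, ite_mul, one_mul, zero_mul]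
  rw [Finset.sum_ite_eq' Finset.univ a₀]
  simp only [Finset.mem_univ, if_pos]
  refine Finset.sum_congr rfl fun k _ => ?_
  rw [failLe_oneStep_ne i₀ a₀ n ([] ++ [(i₀, a₀)]) k (by simp)]

variable (hp0 : ∀ i, ∀ a ∈ Acts i, ∀ j, 0 ≤ p i a j)
  (hp1 : ∀ i, ∀ a ∈ Acts i, ∑ j, p i a j = 1)

include hp0 hp1 in
lemma failProb_oneStep (hg : ∀ i, g i ∈ Acts i) {i₀ : S} {a₀ : A}
    (ha₀ : a₀ ∈ Acts i₀) (hi₀ : i₀ ∉ B) :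
    failProb p B (oneStep i₀ a₀ g) i₀
      = ∑ j, p i₀ a₀ j * hitProb (fun i j => p i (g i) j) B j := by
  have hπ := oneStep_isPolicy hg ha₀
  have hq0 : ∀ i j, 0 ≤ p i (g i) j := fun i j => hp0 i (g i) (hg i) j
  have hq1 : ∀ i, ∑ j, p i (g i) j = 1 := fun i => hp1 i (g i) (hg i)
  have h1 : Filter.Tendsto (fun n => failLe p B (oneStep i₀ a₀ g) (n + 1) [] i₀)
      Filter.atTop (nhds (failProb p B (oneStep i₀ a₀ g) i₀)) :=
    (Filter.tendsto_add_atTop_iff_nat 1).2 (tendsto_failLe hp0 hp1 hπ i₀)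
  have h2 : Filter.Tendsto (fun n => failLe p B (oneStep i₀ a₀ g) (n + 1) [] i₀)
      Filter.atTop
      (nhds (∑ j, p i₀ a₀ j * hitProb (fun i j => p i (g i) j) B j)) := by
    simp only [failLe_oneStep_succ a₀ _ hi₀]
    exact tendsto_finset_sum _ fun j _ =>
      (tendsto_hitLe hq0 hq1 j).const_mul (p i₀ a₀ j)
  exact tendsto_nhds_unique h1 h2

end OneStep

section MainLemmas
variable [Fintype S] [Fintype A] [DecidableEq S]
  {Acts : S → Finset A} (hA : ∀ i, (Acts i).Nonempty)
  {p : S → A → S → ℝ} {B : Finset S}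
  (hp0 : ∀ i, ∀ a ∈ Acts i, ∀ j, 0 ≤ p i a j)
  (hp1 : ∀ i, ∀ a ∈ Acts i, ∑ j, p i a j = 1)
  {g : S → A} (hg : ∀ i, g i ∈ Acts i)
  (hFg : Fabs p B g = FStar Acts p B)

include hp0 hp1 hg hFg in
/-- Splitting `∑_j p(j|i,a) w_j` over the partition `B ∪ F_* ∪ G_*`. -/
lemma sum_w_split (i : S) (a : A) :
    ∑ j, p i a j * hitProb (fun i j => p i (g i) j) B j
      = (∑ j ∈ B, p i a j)
        + ∑ j ∈ GStar Acts p B, p i a j * hitProb (fun i j => p i (g i) j) B j := by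
  rw [sum_split (Acts := Acts) (fun j => p i a j * hitProb (fun i j => p i (g i) j) B j)]
  have hB : ∑ j ∈ B, p i a j * hitProb (fun i j => p i (g i) j) B j = ∑ j ∈ B, p i a j :=
    Finset.sum_congr rfl fun j hj => by rw [hitProb_mem hj, mul_one]
  have hF : ∑ j ∈ FSet Acts p B, p i a j * hitProb (fun i j => p i (g i) j) B j = 0 :=
    Finset.sum_eq_zero fun j hj => by
      rw [hitProb_zero_on_FSet hp0 hp1 hg hFg hj, mul_zero]
  rw [hB, hF, add_zero]

include hA hp0 hp1 hg hFg in
/-- Main induction: a subharmonic `hitProb` is below `failLe + stay`. -/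
lemma w_le_failLe_add_stay
    (hsub : ∀ i ∈ GStar Acts p B, ∀ a ∈ Acts i,
      hitProb (fun i j => p i (g i) j) B i
        ≤ ∑ j, p i a j * hitProb (fun i j => p i (g i) j) B j)
    {π : List (S × A) → S → A → ℝ} (hπ : IsPolicy Acts π) :
    ∀ (n : ℕ) (h : List (S × A)) (i : S),
      hitProb (fun i j => p i (g i) j) B i
        ≤ failLe p B π n h i + stay Acts hA p B n i := by
  have hq0 : ∀ i j, 0 ≤ p i (g i) j := fun i j => hp0 i (g i) (hg i) j
  have hq1 : ∀ i, ∑ j, p i (g i) j = 1 := fun i => hp1 i (g i) (hg i)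
  intro n
  induction n with
  | zero =>
    intro h i
    by_cases hiB : i ∈ B
    · rw [hitProb_mem hiB, failLe_mem 0 h hiB]
      have := stay_nonneg hA hp0 (B := B) 0 i
      linarith
    · by_cases hiG : i ∈ GStar Acts p B
      · have h1 : failLe p B π 0 h i = 0 := by simp [failLe, hiB]
        have h2 : stay Acts hA p B 0 i = 1 := by simp [stay, hiG]
        rw [h1, h2]
        have := hitProb_le_one hq0 hq1 (B := B) i
        linarith
      · have hiF : i ∈ FSet Acts p B := by
          rw [mem_FSet]
          by_contra hiF
          exact hiG (mem_GStar.2 ⟨hiB, hiF⟩)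
        rw [hitProb_zero_on_FSet hp0 hp1 hg hFg hiF]
        have h1 : failLe p B π 0 h i = 0 := by simp [failLe, hiB]
        have h2 := stay_nonneg hA hp0 (B := B) 0 i
        linarith
  | succ n ih =>
    intro h i
    by_cases hiB : i ∈ B
    · rw [hitProb_mem hiB, failLe_mem (n + 1) h hiB]
      have := stay_nonneg hA hp0 (B := B) (n + 1) i
      linarith
    · by_cases hiG : i ∈ GStar Acts p B
      · -- key case
        have hkey : ∀ a ∈ Acts i,
            hitProb (fun i j => p i (g i) j) B i - stay Acts hA p B (n + 1) i
              ≤ ∑ j, p i a j * failLe p B π n (h ++ [(i, a)]) j := by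
          intro a ha
          have h1 := hsub i hiG a ha
          have h2 : ∑ j, p i a j * hitProb (fun i j => p i (g i) j) B j
              ≤ ∑ j, p i a j * (failLe p B π n (h ++ [(i, a)]) j
                + stay Acts hA p B n j) :=
            Finset.sum_le_sum fun j _ =>
              mul_le_mul_of_nonneg_left (ih (h ++ [(i, a)]) j) (hp0 i a ha j)
          have h3 : ∑ j, p i a j * (failLe p B π n (h ++ [(i, a)]) j
                + stay Acts hA p B n j)
              = (∑ j, p i a j * failLe p B π n (h ++ [(i, a)]) j)
                + ∑ j, p i a j * stay Acts hA p B n j := by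
            rw [← Finset.sum_add_distrib]; congr 1; ext j; ring
          have h4 : ∑ j, p i a j * stay Acts hA p B n j
              ≤ stay Acts hA p B (n + 1) i := by
            rw [show stay Acts hA p B (n + 1) i = (Acts i).sup' (hA i)
                (fun a => ∑ j, p i a j * stay Acts hA p B n j) by
              simp [stay, hiG]]
            exact Finset.le_sup' (fun a => ∑ j, p i a j * stay Acts hA p B n j) ha
          linarith
        have hfl : failLe p B π (n + 1) h i
            = ∑ a ∈ Acts i, π h i a
                * ∑ j, p i a j * failLe p B π n (h ++ [(i, a)]) j := by
          simp only [failLe, if_neg hiB]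
          exact sum_policy_mul hπ h i _
        rw [hfl]
        have hge : ∑ a ∈ Acts i, π h i a
              * ∑ j, p i a j * failLe p B π n (h ++ [(i, a)]) j
            ≥ ∑ a ∈ Acts i, π h i a
              * (hitProb (fun i j => p i (g i) j) B i - stay Acts hA p B (n + 1) i) :=
          Finset.sum_le_sum fun a ha =>
            mul_le_mul_of_nonneg_left (hkey a ha) ((hπ h i).1 a)
        rw [← Finset.sum_mul, (hπ h i).2.1, one_mul] at hge
        linarith
      · have hiF : i ∈ FSet Acts p B := by
          rw [mem_FSet]
          by_contra hiF
          exact hiG (mem_GStar.2 ⟨hiB, hiF⟩)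
        rw [hitProb_zero_on_FSet hp0 hp1 hg hFg hiF]
        have h1 := failLe_nonneg (B := B) hp0 hπ (n + 1) h i
        have h2 := stay_nonneg hA hp0 (B := B) (n + 1) i
        linarith

end MainLemmas

theorem stmt14 [Fintype S] [Fintype A] [DecidableEq S]
    (Acts : S → Finset A) (hA : ∀ i, (Acts i).Nonempty)
    (p : S → A → S → ℝ) (B : Finset S)
    (hp0 : ∀ i, ∀ a ∈ Acts i, ∀ j, 0 ≤ p i a j)
    (hp1 : ∀ i, ∀ a ∈ Acts i, ∑ j, p i a j = 1)
    (hF : (FStar Acts p B).Nonempty) (hG : (GStar Acts p B).Nonempty)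
    (g : S → A) (hg : ∀ i, g i ∈ Acts i)
    (hFg : Fabs p B g = FStar Acts p B) :
    (∀ i ∈ Bᶜ, hitProb (fun i j => p i (g i) j) B i = failStar Acts p B i)
    ↔
    ∀ i ∈ GStar Acts p B,
      hitProb (fun i j => p i (g i) j) B i
        = (Acts i).inf' (hA i) fun a =>
            (∑ j ∈ B, p i a j)
              + ∑ j ∈ GStar Acts p B,
                  p i a j * hitProb (fun i j => p i (g i) j) B j := by
  have hq0 : ∀ i j, 0 ≤ p i (g i) j := fun i j => hp0 i (g i) (hg i) j
  have hq1 : ∀ i, ∑ j, p i (g i) j = 1 := fun i => hp1 i (g i) (hg i)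
  have hbdd : ∀ i : S,
      BddBelow {x | ∃ π, IsPolicy Acts π ∧ x = failProb p B π i} := by
    intro i
    refine ⟨0, ?_⟩
    rintro x ⟨π, hπ, rfl⟩
    exact failProb_nonneg hp0 hp1 hπ i
  constructor
  · -- optimal → equation
    intro hopt i hiG
    have hiB : i ∉ B := (mem_GStar.1 hiG).1
    have hle : ∀ a ∈ Acts i,
        hitProb (fun i j => p i (g i) j) B i
          ≤ (∑ j ∈ B, p i a j) + ∑ j ∈ GStar Acts p B,
              p i a j * hitProb (fun i j => p i (g i) j) B j := by
      intro a ha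
      have h1 : failStar Acts p B i ≤ failProb p B (oneStep i a g) i :=
        csInf_le (hbdd i) ⟨oneStep i a g, oneStep_isPolicy hg ha, rfl⟩
      rw [failProb_oneStep hp0 hp1 hg ha hiB, sum_w_split hp0 hp1 hg hFg i a] at h1
      rw [hopt i (Finset.mem_compl.2 hiB)]
      exact h1
    have hgeq : hitProb (fun i j => p i (g i) j) B i
        = (∑ j ∈ B, p i (g i) j) + ∑ j ∈ GStar Acts p B,
            p i (g i) j * hitProb (fun i j => p i (g i) j) B j := by
      rw [hitProb_step hq0 hq1 hiB]
      exact sum_w_split hp0 hp1 hg hFg i (g i)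
    refine le_antisymm (Finset.le_inf' _ _ fun a ha => hle a ha) ?_
    exact le_trans (Finset.inf'_le _ (hg i)) (le_of_eq hgeq.symm)
  · -- equation → optimal
    intro heq i hiB'
    have hiB : i ∉ B := Finset.mem_compl.1 hiB'
    have hsub : ∀ i ∈ GStar Acts p B, ∀ a ∈ Acts i,
        hitProb (fun i j => p i (g i) j) B i
          ≤ ∑ j, p i a j * hitProb (fun i j => p i (g i) j) B j := by
      intro i hiG a ha
      rw [sum_w_split hp0 hp1 hg hFg i a, heq i hiG]
      exact Finset.inf'_le _ ha
    have h1 : failStar Acts p B i ≤ hitProb (fun i j => p i (g i) j) B i :=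
      csInf_le (hbdd i) ⟨detPol g, detPol_isPolicy hg, (failProb_detPol g i).symm⟩
    have h2 : hitProb (fun i j => p i (g i) j) B i ≤ failStar Acts p B i := by
      refine le_csInf ⟨hitProb (fun i j => p i (g i) j) B i,
        detPol g, detPol_isPolicy hg, (failProb_detPol g i).symm⟩ ?_
      rintro x ⟨π, hπ, rfl⟩
      refine le_of_forall_pos_le_add fun ε hε => ?_
      obtain ⟨n, hn⟩ := stay_small hA hp0 hp1 hG i hε
      have h3 := w_le_failLe_add_stay hA hp0 hp1 hg hFg hsub hπ n [] i
      have h4 := failLe_le_failProb (B := B) hp0 hp1 hπ n i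
      linarith
    exact le_antisymm h2 h1
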